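/- Let U ⊆ ℝ^n be open, let L be a smooth field of n×n real matrices on U, and let C⁰, C¹, C² be smooth real-valued functions on U satisfying the recursion ∂_k C¹ = Σ_h L^h_k ∂_h C⁰ and ∂_k C² = Σ_h L^h_k ∂_h C¹ for all k ∈ {1,…,n}. Then for all j, k ∈ {1,…,n}, the identity ∂_j ∂_k C² − ∂_k ∂_j C² = Σ_i N^i_{jk} ∂_i C⁰ holds on U, where N^i_{jk} := Σ_h ((∂_j L^h_k − ∂_k L^h_j) L^i_h + L^h_k ∂_h L^i_j − L^h_j ∂_h L^i_k) are the components of the Nijenhuis torsion of L. In particular, since second partial derivatives commute, Σ_i N^i_{jk} ∂_i C⁰ = 0 on U for all j, k. -/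

import Mathlib

open scoped BigOperators

section Defs

variable {ι : Type*} [Fintype ι] [DecidableEq ι]

/-- Partial derivative of a scalar function in the `i`-th coordinate direction. -/
noncomputable def pd (i : ι) (f : (ι → ℝ) → ℝ) (u : ι → ℝ) : ℝ :=
  fderiv ℝ f u (Pi.single i 1)

end Defs


section Helpers
open scoped ContDiff
variable {ι : Type*} [Fintype ι] [DecidableEq ι]

lemma pd_congr {f g : (ι → ℝ) → ℝ} {u : ι → ℝ} (h : f =ᶠ[nhds u] g) (i : ι) :
    pd i f u = pd i g u := by
  unfold pd; rw [h.fderiv_eq]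

lemma pd_sum {κ : Type*} (s : Finset κ) (f : κ → (ι → ℝ) → ℝ) (u : ι → ℝ)
    (hf : ∀ a ∈ s, DifferentiableAt ℝ (f a) u) (i : ι) :
    pd i (fun v => ∑ a ∈ s, f a v) u = ∑ a ∈ s, pd i (f a) u := by
  unfold pd
  rw [fderiv_fun_sum hf]
  simp

lemma pd_mul {f g : (ι → ℝ) → ℝ} {u : ι → ℝ} (hf : DifferentiableAt ℝ f u)
    (hg : DifferentiableAt ℝ g u) (i : ι) :
    pd i (fun v => f v * g v) u = pd i f u * g u + f u * pd i g u := by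
  unfold pd
  rw [fderiv_fun_mul hf hg]
  simp only [ContinuousLinearMap.add_apply, ContinuousLinearMap.smul_apply, smul_eq_mul]
  ring

omit [DecidableEq ι] in
lemma pd_apply_snd {f : (ι → ℝ) → ℝ} {u : ι → ℝ}
    (hf : DifferentiableAt ℝ (fderiv ℝ f) u) (w e : ι → ℝ) :
    fderiv ℝ (fun v => fderiv ℝ f v w) u e = fderiv ℝ (fderiv ℝ f) u e w := by
  have h := ((ContinuousLinearMap.apply ℝ ℝ w).hasFDerivAt.comp u hf.hasFDerivAt).fderiv
  rw [show (fun v => fderiv ℝ f v w) = (ContinuousLinearMap.apply ℝ ℝ w) ∘ (fderiv ℝ f) from rfl, h]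
  rfl

lemma pd_contDiffAt {f : (ι → ℝ) → ℝ} {u : ι → ℝ} (hf : ContDiffAt ℝ ∞ f u) (k : ι) :
    ContDiffAt ℝ ∞ (fun v => pd k f v) u := by
  have h1 : ContDiffAt ℝ ∞ (fderiv ℝ f) u := hf.fderiv_right (m := ∞) (by simp)
  exact (ContinuousLinearMap.apply ℝ ℝ (Pi.single k 1)).contDiff.contDiffAt.comp u h1

lemma pd_swap {f : (ι → ℝ) → ℝ} {u : ι → ℝ} (hf : ContDiffAt ℝ ∞ f u) (j k : ι) :
    pd j (fun v => pd k f v) u = pd k (fun v => pd j f v) u := by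
  have hsymm : IsSymmSndFDerivAt ℝ f u := hf.isSymmSndFDerivAt (by simp only [minSmoothness_of_isRCLikeNormedField]; exact ENat.LEInfty.out)
  have hdf : DifferentiableAt ℝ (fderiv ℝ f) u :=
    (hf.fderiv_right (m := 1) (by rw [one_add_one_eq_two]; exact ENat.LEInfty.out)).differentiableAt one_ne_zero
  show fderiv ℝ (fun v => fderiv ℝ f v (Pi.single k 1)) u (Pi.single j 1)
      = fderiv ℝ (fun v => fderiv ℝ f v (Pi.single j 1)) u (Pi.single k 1)
  rw [pd_apply_snd hdf, pd_apply_snd hdf, hsymm]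

end Helpers

open scoped ContDiff in

/-- Components of the Nijenhuis torsion of a matrix field `L` in coordinates:
`N^i_{jk} = Σ_h ((∂_j L^h_k − ∂_k L^h_j) L^i_h + L^h_k ∂_h L^i_j − L^h_j ∂_h L^i_k)`. -/
noncomputable def nijComp {n : ℕ} (L : (Fin n → ℝ) → Matrix (Fin n) (Fin n) ℝ)
    (i j k : Fin n) (u : Fin n → ℝ) : ℝ :=
  ∑ h, ((pd j (fun v => L v h k) u - pd k (fun v => L v h j) u) * L u i h
        + L u h k * pd h (fun v => L v i j) u
        - L u h j * pd h (fun v => L v i k) u)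

open scoped ContDiff

/-- for smooth `C⁰, C¹, C²` satisfying the recursion
`∂_k C¹ = Σ_h L^h_k ∂_h C⁰` and `∂_k C² = Σ_h L^h_k ∂_h C¹` on `U`, one has
`∂_j∂_k C² − ∂_k∂_j C² = Σ_i N^i_{jk} ∂_i C⁰` on `U`; in particular
`Σ_i N^i_{jk} ∂_i C⁰ = 0` on `U`. -/
theorem stmt19 {n : ℕ} (U : Set (Fin n → ℝ)) (hU : IsOpen U)
    (L : (Fin n → ℝ) → Matrix (Fin n) (Fin n) ℝ)
    (hL : ∀ i j : Fin n, ContDiffOn ℝ (⊤ : ℕ∞) (fun u => L u i j) U)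
    (C0 C1 C2 : (Fin n → ℝ) → ℝ)
    (hC0 : ContDiffOn ℝ (⊤ : ℕ∞) C0 U) (hC1 : ContDiffOn ℝ (⊤ : ℕ∞) C1 U)
    (hC2 : ContDiffOn ℝ (⊤ : ℕ∞) C2 U)
    (hrec1 : ∀ k : Fin n, ∀ u ∈ U, pd k C1 u = ∑ h, L u h k * pd h C0 u)
    (hrec2 : ∀ k : Fin n, ∀ u ∈ U, pd k C2 u = ∑ h, L u h k * pd h C1 u) :
    (∀ j k : Fin n, ∀ u ∈ U,
      pd j (fun v => pd k C2 v) u - pd k (fun v => pd j C2 v) u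
        = ∑ i, nijComp L i j k u * pd i C0 u) ∧
    (∀ j k : Fin n, ∀ u ∈ U, ∑ i, nijComp L i j k u * pd i C0 u = 0) := by
  have main : ∀ j k : Fin n, ∀ u ∈ U,
      pd j (fun v => pd k C2 v) u - pd k (fun v => pd j C2 v) u
        = ∑ i, nijComp L i j k u * pd i C0 u := by
    intro j k u hu
    have hUu : U ∈ nhds u := hU.mem_nhds hu
    have hC0a : ContDiffAt ℝ ∞ C0 u := hC0.contDiffAt hUu
    have hC1a : ContDiffAt ℝ ∞ C1 u := hC1.contDiffAt hUu
    have hLd : ∀ a b : Fin n, DifferentiableAt ℝ (fun w => L w a b) u :=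
      fun a b => ((hL a b).contDiffAt hUu).differentiableAt (by simp)
    have hP0d : ∀ i : Fin n, DifferentiableAt ℝ (fun v => pd i C0 v) u :=
      fun i => (pd_contDiffAt hC0a i).differentiableAt (by simp)
    have hP1d : ∀ i : Fin n, DifferentiableAt ℝ (fun v => pd i C1 v) u :=
      fun i => (pd_contDiffAt hC1a i).differentiableAt (by simp)
    have hA : ∀ j k : Fin n, pd j (fun v => pd k C2 v) u
        = ∑ h, ∑ i, (pd j (fun v => L v h k) u * (L u i h * pd i C0 u)
            + (L u h k * (pd h (fun v => L v i j) u * pd i C0 u)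
              + L u h k * (L u i j * pd h (fun v => pd i C0 v) u))) := by
      intro j k
      have e2 : (fun v => pd k C2 v) =ᶠ[nhds u] (fun v => ∑ h, L v h k * pd h C1 v) :=
        Filter.eventuallyEq_of_mem hUu (fun v hv => hrec2 k v hv)
      rw [pd_congr e2 j,
        pd_sum Finset.univ (fun h v => L v h k * pd h C1 v) u (fun h _ => (hLd h k).mul (hP1d h)) j]
      refine Finset.sum_congr rfl (fun h _ => ?_)
      rw [pd_mul (hLd h k) (hP1d h) j, hrec1 h u hu, pd_swap hC1a j h]
      have e1 : (fun v => pd j C1 v) =ᶠ[nhds u] (fun v => ∑ i, L v i j * pd i C0 v) :=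
        Filter.eventuallyEq_of_mem hUu (fun v hv => hrec1 j v hv)
      rw [pd_congr e1 h,
        pd_sum Finset.univ (fun i v => L v i j * pd i C0 v) u (fun i _ => (hLd i j).mul (hP0d i)) h,
        Finset.mul_sum, Finset.mul_sum, ← Finset.sum_add_distrib]
      refine Finset.sum_congr rfl (fun i _ => ?_)
      rw [pd_mul (hLd i j) (hP0d i) h]
      ring
    have hA' : ∀ j k : Fin n, pd j (fun v => pd k C2 v) u
        = (∑ h, ∑ i, pd j (fun v => L v h k) u * (L u i h * pd i C0 u))
          + ((∑ h, ∑ i, L u h k * (pd h (fun v => L v i j) u * pd i C0 u))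
            + (∑ h, ∑ i, L u h k * (L u i j * pd h (fun v => pd i C0 v) u))) := by
      intro j k
      rw [hA j k]
      simp only [Finset.sum_add_distrib]
    have hScancel :
        (∑ h, ∑ i, L u h k * (L u i j * pd h (fun v => pd i C0 v) u))
          = ∑ h, ∑ i, L u h j * (L u i k * pd h (fun v => pd i C0 v) u) := by
      rw [Finset.sum_comm]
      refine Finset.sum_congr rfl (fun h _ => Finset.sum_congr rfl (fun i _ => ?_))
      rw [pd_swap hC0a i h]
      ring
    have hRHS : (∑ i, nijComp L i j k u * pd i C0 u)
        = ∑ h, ∑ i, ((pd j (fun v => L v h k) u - pd k (fun v => L v h j) u) * L u i h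
            + L u h k * pd h (fun v => L v i j) u
            - L u h j * pd h (fun v => L v i k) u) * pd i C0 u := by
      simp only [nijComp, Finset.sum_mul]
      rw [Finset.sum_comm]
    have hab :
        (∑ h, ∑ i, pd j (fun v => L v h k) u * (L u i h * pd i C0 u))
          - (∑ h, ∑ i, pd k (fun v => L v h j) u * (L u i h * pd i C0 u))
          + ((∑ h, ∑ i, L u h k * (pd h (fun v => L v i j) u * pd i C0 u))
            - (∑ h, ∑ i, L u h j * (pd h (fun v => L v i k) u * pd i C0 u)))
        = ∑ h, ∑ i, ((pd j (fun v => L v h k) u - pd k (fun v => L v h j) u) * L u i h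
            + L u h k * pd h (fun v => L v i j) u
            - L u h j * pd h (fun v => L v i k) u) * pd i C0 u := by
      simp only [← Finset.sum_sub_distrib, ← Finset.sum_add_distrib]
      refine Finset.sum_congr rfl (fun h _ => Finset.sum_congr rfl (fun i _ => ?_))
      ring
    rw [hA' j k, hA' k j, hRHS]
    linear_combination hab + hScancel
  refine ⟨main, fun j k u hu => ?_⟩
  rw [← main j k u hu, pd_swap (hC2.contDiffAt (hU.mem_nhds hu)) j k, sub_self]
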